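/- arXiv:2212.05336 — 3 statements merged into one kernel-verified Lean document; each statement's English description precedes it below -/
import Mathlib

section
/- Let $N$ be a positive integer, $q = e^{2\pi i/N}$, and $(a,b) \in (\mathbb{Z}/N\mathbb{Z})^2$ with $a \equiv 2b \pmod{N}$. Suppose $s \in \mathbb{C}^\times$ satisfies $s^N = q^{-b}$. Define $t(i,j) = s^{-ij}$ for canonical representatives $0 \leq i,j < N$. Then for all $0 \leq i,j,k < N$, $\xi_b(j,k,i)\, t(i, (j+k) \bmod N)\, \xi_b(i,j,k) = t(i,j)\, \xi_b(j,i,k)\, t(i,k)$, where $\xi_b(i,j,k) = q^{bk}$ if $i+j \geq N$ and $1$ otherwise. -/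
/-- Scalar form of the first braided zesting condition for cyclic groups:
with `q = e^{2πi/N}`, `a = 2b`, `s^N = q^{-b}`, `t(i,j) = s^{-ij}` and
`ξ_b(i,j,k) = q^{bk}` when `i+j ≥ N` (else 1), one has
`ξ_b(j,k,i) t(i,(j+k) mod N) ξ_b(i,j,k) = t(i,j) ξ_b(j,i,k) t(i,k)`. -/
theorem stmt_4 (N : ℕ) (hN : 0 < N) (q : ℂ)
    (hq : q = Complex.exp (2 * Real.pi * Complex.I / N))
    (a b : ZMod N) (hab : a = 2 * b)
    (s : ℂ) (hs : s ≠ 0) (hsN : s ^ N = q ^ (-(b.val : ℤ)))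
    (t : ℕ → ℕ → ℂ) (ht : ∀ i j : ℕ, t i j = s ^ (-((i * j : ℕ) : ℤ)))
    (ξ : ℕ → ℕ → ℕ → ℂ)
    (hξ : ∀ i j k : ℕ, ξ i j k = if N ≤ i + j then q ^ (b.val * k) else 1)
    (i j k : ℕ) (hi : i < N) (hj : j < N) (hk : k < N) :
    ξ j k i * t i ((j + k) % N) * ξ i j k = t i j * ξ j i k * t i k := by
  have hq0 : q ≠ 0 := by rw [hq]; exact Complex.exp_ne_zero _
  rw [ht, ht, ht, hξ, hξ, hξ, Nat.add_comm j i]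
  by_cases h : N ≤ j + k
  · have hmod : (j + k) % N = j + k - N := by
      rw [Nat.mod_eq_sub_mod h, Nat.mod_eq_of_lt (by omega)]
    rw [if_pos h, hmod]
    have key : s ^ (-((i * (j + k - N) : ℕ) : ℤ)) =
        s ^ (-((i * j : ℕ) : ℤ)) * s ^ (-((i * k : ℕ) : ℤ)) * (s ^ N) ^ i := by
      rw [← zpow_natCast (s ^ N), ← zpow_natCast s N, ← zpow_mul, ← zpow_add₀ hs,
        ← zpow_add₀ hs]
      congr 1
      obtain ⟨m, hm⟩ := Nat.exists_eq_add_of_le h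
      have hsub : j + k - N = m := by omega
      have : (((i * (j + k - N) : ℕ)) : ℤ) = i * j + i * k - N * i := by
        rw [hsub]
        have hz : (j : ℤ) + k = N + m := by exact_mod_cast hm
        push_cast
        linear_combination (-(i : ℤ)) * hz
      omega
    rw [key, hsN, ← zpow_natCast (q ^ (-(b.val : ℤ))) i, ← zpow_mul,
      ← zpow_natCast q (b.val * i)]
    have hcancel : q ^ ((b.val * i : ℕ) : ℤ) * q ^ ((-(b.val : ℤ)) * i) = 1 := by
      rw [← zpow_add₀ hq0,
        show ((b.val * i : ℕ) : ℤ) + (-(b.val : ℤ)) * i = 0 by push_cast; ring,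
        zpow_zero]
    linear_combination (s ^ (-((i * j : ℕ) : ℤ)) * s ^ (-((i * k : ℕ) : ℤ)) *
      (if N ≤ i + j then q ^ (b.val * k) else 1)) * hcancel
  · have hmod : (j + k) % N = j + k := Nat.mod_eq_of_lt (by omega)
    rw [if_neg h, hmod]
    have key : s ^ (-((i * (j + k) : ℕ) : ℤ)) =
        s ^ (-((i * j : ℕ) : ℤ)) * s ^ (-((i * k : ℕ) : ℤ)) := by
      rw [← zpow_add₀ hs]
      congr 1
      push_cast; ring
    rw [key]; ring
end

section
/- Let $G$ be a finite group, $\omega \in Z^3(G, \mathbb{k}^\times)$ a 3-cocycle (trivial action). Define, for $g,h,k \in G$ with $k^g := g^{-1}kg$, the scalars $\mu_g(h,k) = \frac{\omega(h,k,g)\,\omega(g, h^g, k^g)}{\omega(h,g,k^g)}$ and $\gamma_{g,h}(k) = \frac{\omega(g, k^g, h)}{\omega(g,h,k^{gh})\,\omega(k,g,h)}$. Then these scalars satisfy the compositor coherence: $\gamma_{k,h}(x)\,\gamma_{kh,g}(x) = \gamma_{h,g}(x^k)\,\gamma_{k,hg}(x)$ for all $g,h,k,x \in G$. -/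
/-- Scalar form of the compositor coherence (axiom (2) of a right `G`-action) for the
`G`-crossed braided structure on `Vect_G^ω`. -/
theorem stmt_5 (G : Type) [Group G] [Finite G] (𝕜 : Type) [Field 𝕜]
    (ω : G → G → G → 𝕜ˣ)
    (hω : ∀ g1 g2 g3 g4 : G,
      ω g2 g3 g4 * ω g1 (g2 * g3) g4 * ω g1 g2 g3 = ω (g1 * g2) g3 g4 * ω g1 g2 (g3 * g4))
    (μ : G → G → G → 𝕜ˣ)
    (hμ : ∀ g h k : G, μ g h k =
      ω h k g * ω g (g⁻¹ * h * g) (g⁻¹ * k * g) / ω h g (g⁻¹ * k * g))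
    (γ : G → G → G → 𝕜ˣ)
    (hγ : ∀ g h k : G, γ g h k =
      ω g (g⁻¹ * k * g) h / (ω g h ((g * h)⁻¹ * k * (g * h)) * ω k g h)) :
    ∀ g h k x : G,
      γ k h x * γ (k * h) g x = γ h g (k⁻¹ * x * k) * γ k (h * g) x := by
  intro g h k x
  have hA := hω k (k⁻¹*x*k) h g
  have hB := hω k h ((k*h)⁻¹*x*(k*h)) g
  have hC := hω k h g ((k*h*g)⁻¹*x*(k*h*g))
  have hD := hω x k h g
  rw [hγ, hγ, hγ, hγ]
  simp only [mul_inv_rev, mul_assoc, inv_mul_cancel_left, mul_inv_cancel_left,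
    inv_mul_cancel, mul_inv_cancel, mul_one, one_mul] at *
  rw [Units.ext_iff]
  have vA := congrArg (Units.val) hA
  have vB := congrArg (Units.val) hB
  have vC := congrArg (Units.val) hC
  have vD := congrArg (Units.val) hD
  push_cast at vA vB vC vD ⊢
  field_simp
  have hS : (ω (x * k) h g : 𝕜) * (ω k (k⁻¹ * (x * k)) (h * g) : 𝕜) * (ω h (h⁻¹ * (k⁻¹ * (x * (k * h)))) g : 𝕜) * (ω k (k⁻¹ * (x * (k * h))) g : 𝕜) * (ω k h (h⁻¹ * (k⁻¹ * (x * (k * h)))) : 𝕜) * (ω (k * h) g (g⁻¹ * (h⁻¹ * (k⁻¹ * (x * (k * (h * g)))))) : 𝕜) * (ω k h (h⁻¹ * (k⁻¹ * (x * (k * (h * g))))) : 𝕜) * (ω k h g : 𝕜) * (ω x (k * h) g : 𝕜) * (ω x k h : 𝕜) ≠ 0 := by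
    simp [Units.ne_zero]
  have key : ((ω k (k⁻¹ * (x * k)) h : 𝕜) * (ω (k * h) (h⁻¹ * (k⁻¹ * (x * (k * h)))) g : 𝕜) * (ω h g (g⁻¹ * (h⁻¹ * (k⁻¹ * (x * (k * (h * g)))))) : 𝕜) * (ω (k⁻¹ * (x * k)) h g : 𝕜) * (ω k (h * g) (g⁻¹ * (h⁻¹ * (k⁻¹ * (x * (k * (h * g)))))) : 𝕜) * (ω x k (h * g) : 𝕜)) * ((ω (x * k) h g : 𝕜) * (ω k (k⁻¹ * (x * k)) (h * g) : 𝕜) * (ω h (h⁻¹ * (k⁻¹ * (x * (k * h)))) g : 𝕜) * (ω k (k⁻¹ * (x * (k * h))) g : 𝕜) * (ω k h (h⁻¹ * (k⁻¹ * (x * (k * h)))) : 𝕜) * (ω (k * h) g (g⁻¹ * (h⁻¹ * (k⁻¹ * (x * (k * (h * g)))))) : 𝕜) * (ω k h (h⁻¹ * (k⁻¹ * (x * (k * (h * g))))) : 𝕜) * (ω k h g : 𝕜) * (ω x (k * h) g : 𝕜) * (ω x k h : 𝕜)) = ((ω h (h⁻¹ * (k⁻¹ * (x * (k * h)))) g :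 𝕜) * (ω k (k⁻¹ * (x * k)) (h * g) : 𝕜) * (ω k h (h⁻¹ * (k⁻¹ * (x * (k * h)))) : 𝕜) * (ω x k h : 𝕜) * (ω (k * h) g (g⁻¹ * (h⁻¹ * (k⁻¹ * (x * (k * (h * g)))))) : 𝕜) * (ω x (k * h) g : 𝕜)) * ((ω (x * k) h g : 𝕜) * (ω k (k⁻¹ * (x * k)) (h * g) : 𝕜) * (ω h (h⁻¹ * (k⁻¹ * (x * (k * h)))) g : 𝕜) * (ω k (k⁻¹ * (x * (k * h))) g : 𝕜) * (ω k h (h⁻¹ * (k⁻¹ * (x * (k * h)))) : 𝕜) * (ω (k * h) g (g⁻¹ * (h⁻¹ * (k⁻¹ * (x * (k * (h * g)))))) : 𝕜) * (ω k h (h⁻¹ * (k⁻¹ * (x * (k * (h * g))))) : 𝕜) * (ω k h g : 𝕜) * (ω x (k * h) g : 𝕜) * (ω x k h : 𝕜)) := by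
    linear_combination ((ω h (h⁻¹ * (k⁻¹ * (x * (k * h)))) g : 𝕜) * (ω k (k⁻¹ * (x * k)) (h * g) : 𝕜) * (ω k h (h⁻¹ * (k⁻¹ * (x * (k * h)))) : 𝕜) * (ω x k h : 𝕜) * (ω (k * h) g (g⁻¹ * (h⁻¹ * (k⁻¹ * (x * (k * (h * g)))))) : 𝕜) * (ω x (k * h) g : 𝕜)) * ((ω (k * h) (h⁻¹ * (k⁻¹ * (x * (k * h)))) g : 𝕜) * (ω k h (h⁻¹ * (k⁻¹ * (x * (k * (h * g))))) : 𝕜) * (ω h g (g⁻¹ * (h⁻¹ * (k⁻¹ * (x * (k * (h * g)))))) : 𝕜) * (ω k (h * g) (g⁻¹ * (h⁻¹ * (k⁻¹ * (x * (k * (h * g)))))) : 𝕜) * (ω k h g : 𝕜) * (ω (x * k) h g : 𝕜) * (ω x k (h * g) : 𝕜)) * vA - ((ω h (h⁻¹ * (k⁻¹ * (x * (k * h)))) g : 𝕜) * (ω k (k⁻¹ * (x * k)) (h * g) : 𝕜) * (ω k h (h⁻¹ * (k⁻¹ * (x * (k * h)))) : 𝕜) * (ω x k h : 𝕜) * (ω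 (k * h) g (g⁻¹ * (h⁻¹ * (k⁻¹ * (x * (k * (h * g)))))) : 𝕜) * (ω x (k * h) g : 𝕜)) * ((ω (x * k) h g : 𝕜) * (ω k (k⁻¹ * (x * k)) (h * g) : 𝕜) * (ω h g (g⁻¹ * (h⁻¹ * (k⁻¹ * (x * (k * (h * g)))))) : 𝕜) * (ω k (h * g) (g⁻¹ * (h⁻¹ * (k⁻¹ * (x * (k * (h * g)))))) : 𝕜) * (ω k h g : 𝕜) * (ω (x * k) h g : 𝕜) * (ω x k (h * g) : 𝕜)) * vB + ((ω h (h⁻¹ * (k⁻¹ * (x * (k * h)))) g : 𝕜) * (ω k (k⁻¹ * (x * k)) (h * g) : 𝕜) * (ω k h (h⁻¹ * (k⁻¹ * (x * (k * h)))) : 𝕜) * (ω x k h : 𝕜) * (ω (k * h) g (g⁻¹ * (h⁻¹ * (k⁻¹ * (x * (k * (h * g)))))) : 𝕜) * (ω x (k * h) g : 𝕜)) * ((ω (x * k) h g : 𝕜) * (ω k (k⁻¹ * (x * k)) (h * g) : 𝕜) * (ω h (h⁻¹ * (k⁻¹ * (x * (k * h)))) g : 𝕜) * (ω k (k⁻¹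 * (x * (k * h))) g : 𝕜) * (ω k h (h⁻¹ * (k⁻¹ * (x * (k * h)))) : 𝕜) * (ω (x * k) h g : 𝕜) * (ω x k (h * g) : 𝕜)) * vC - ((ω h (h⁻¹ * (k⁻¹ * (x * (k * h)))) g : 𝕜) * (ω k (k⁻¹ * (x * k)) (h * g) : 𝕜) * (ω k h (h⁻¹ * (k⁻¹ * (x * (k * h)))) : 𝕜) * (ω x k h : 𝕜) * (ω (k * h) g (g⁻¹ * (h⁻¹ * (k⁻¹ * (x * (k * (h * g)))))) : 𝕜) * (ω x (k * h) g : 𝕜)) * ((ω (x * k) h g : 𝕜) * (ω k (k⁻¹ * (x * k)) (h * g) : 𝕜) * (ω h (h⁻¹ * (k⁻¹ * (x * (k * h)))) g : 𝕜) * (ω k (k⁻¹ * (x * (k * h))) g : 𝕜) * (ω k h (h⁻¹ * (k⁻¹ * (x * (k * h)))) : 𝕜) * (ω (k * h) g (g⁻¹ * (h⁻¹ * (k⁻¹ * (x * (k * (h * g)))))) : 𝕜) * (ω k h (h⁻¹ * (k⁻¹ * (x * (k * (h * g))))) : 𝕜)) * vD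
  have hPQ : ((ω k (k⁻¹ * (x * k)) h : 𝕜) * (ω (k * h) (h⁻¹ * (k⁻¹ * (x * (k * h)))) g : 𝕜) * (ω h g (g⁻¹ * (h⁻¹ * (k⁻¹ * (x * (k * (h * g)))))) : 𝕜) * (ω (k⁻¹ * (x * k)) h g : 𝕜) * (ω k (h * g) (g⁻¹ * (h⁻¹ * (k⁻¹ * (x * (k * (h * g)))))) : 𝕜) * (ω x k (h * g) : 𝕜)) = ((ω h (h⁻¹ * (k⁻¹ * (x * (k * h)))) g : 𝕜) * (ω k (k⁻¹ * (x * k)) (h * g) : 𝕜) * (ω k h (h⁻¹ * (k⁻¹ * (x * (k * h)))) : 𝕜) * (ω x k h : 𝕜) * (ω (k * h) g (g⁻¹ * (h⁻¹ * (k⁻¹ * (x * (k * (h * g)))))) : 𝕜) * (ω x (k * h) g : 𝕜)) := mul_right_cancel₀ hS key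
  linear_combination hPQ
end

section
/- Let $G$ be a finite group and $\omega \in Z^3(G, \mathbb{k}^\times)$, and define $\mu_g(h,k)$ and $\gamma_{g,h}(k)$ from the 3-cocycle as in the $\mathrm{Vect}_G^\omega$ construction, namely $\mu_g(h,k) = \omega(h,k,g)\omega(g,h^g,k^g)/\omega(h,g,k^g)$ and $\gamma_{g,h}(k) = \omega(g,k^g,h)/(\omega(g,h,k^{gh})\omega(k,g,h))$, where $x^g = g^{-1}xg$. Then the tensorator–compositor compatibility holds: $\gamma_{g,h}(x)\,\gamma_{g,h}(y)\,\mu_{gh}(x,y) = \mu_h(x^g, y^g)\,\mu_g(x,y)\,\gamma_{g,h}(xy)$ for all $g,h,x,y \in G$. -/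
/-- Scalar form of the tensorator–compositor compatibility (axiom (3) of a right
`G`-action) for the `G`-crossed braided structure on `Vect_G^ω`. -/
theorem stmt_6 (G : Type) [Group G] [Finite G] (𝕜 : Type) [Field 𝕜]
    (ω : G → G → G → 𝕜ˣ)
    (hω : ∀ g1 g2 g3 g4 : G,
      ω g2 g3 g4 * ω g1 (g2 * g3) g4 * ω g1 g2 g3 = ω (g1 * g2) g3 g4 * ω g1 g2 (g3 * g4))
    (μ : G → G → G → 𝕜ˣ)
    (hμ : ∀ g h k : G, μ g h k =
      ω h k g * ω g (g⁻¹ * h * g) (g⁻¹ * k * g) / ω h g (g⁻¹ * k * g))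
    (γ : G → G → G → 𝕜ˣ)
    (hγ : ∀ g h k : G, γ g h k =
      ω g (g⁻¹ * k * g) h / (ω g h ((g * h)⁻¹ * k * (g * h)) * ω k g h)) :
    ∀ g h x y : G,
      γ g h x * γ g h y * μ (g * h) x y =
        μ h (g⁻¹ * x * g) (g⁻¹ * y * g) * μ g x y * γ g h (x * y) := by
  intro g h x y
  have r1 := hω g h (h⁻¹ * (g⁻¹ * (x * (g * h)))) (h⁻¹ * (g⁻¹ * (y * (g * h))))
  have r2 := hω g (g⁻¹ * (x * g)) h (h⁻¹ * (g⁻¹ * (y * (g * h))))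
  have r3 := hω g (g⁻¹ * (x * g)) (g⁻¹ * (y * g)) h
  have r4 := hω x g h (h⁻¹ * (g⁻¹ * (y * (g * h))))
  have r5 := hω x g (g⁻¹ * (y * g)) h
  have r6 := hω x y g h
  simp only [hμ, hγ]
  simp only [mul_inv_rev, mul_assoc, mul_inv_cancel_left, inv_mul_cancel_left, inv_inv] at r1 r2 r3 r4 r5 r6 ⊢
  have C : ((ω h (h⁻¹ * (g⁻¹ * (x * (g * h)))) (h⁻¹ * (g⁻¹ * (y * (g * h)))) * (ω g (g⁻¹ * (x * (g * h))) (h⁻¹ * (g⁻¹ * (y * (g * h)))) * ω g h (h⁻¹ * (g⁻¹ * (x * (g * h)))))) * (ω (g⁻¹ * (x * g)) (g⁻¹ * (y * g)) h * (ω g (g⁻¹ * (x * (y * g))) h * ω g (g⁻¹ * (x * g)) (g⁻¹ * (y * g)))) * (ω g h (h⁻¹ * (g⁻¹ * (y * (g * h)))) * (ω x (g * h) (h⁻¹ * (g⁻¹ * (y * (g * h)))) * ω x g h)) * (ω y g h * (ω x (y * g) h * ω x y g)) * (ω (x * g) h (h⁻¹ * (g⁻¹ * (y * (g * h)))) * ω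 g (g⁻¹ * (x * g)) (g⁻¹ * (y * (g * h)))) * (ω (x * g) (g⁻¹ * (y * g)) h * ω x g (g⁻¹ * (y * (g * h)))) : 𝕜ˣ) =
      (ω (g * h) (h⁻¹ * (g⁻¹ * (x * (g * h)))) (h⁻¹ * (g⁻¹ * (y * (g * h)))) * ω g h (h⁻¹ * (g⁻¹ * (x * (y * (g * h)))))) * (ω (x * g) (g⁻¹ * (y * g)) h * ω g (g⁻¹ * (x * g)) (g⁻¹ * (y * (g * h)))) * (ω (x * g) h (h⁻¹ * (g⁻¹ * (y * (g * h)))) * ω x g (g⁻¹ * (y * (g * h)))) * (ω (x * y) g h * ω x y (g * h)) * (ω (g⁻¹ * (x * g)) h (h⁻¹ * (g⁻¹ * (y * (g * h)))) * (ω g (g⁻¹ * (x * (g * h))) (h⁻¹ * (g⁻¹ * (y * (g * h)))) * ω g (g⁻¹ * (x * g)) h)) * (ω g (g⁻¹ * (y * g)) h * (ω x (y * g) h * ω x g (g⁻¹ * (y * g)))) := by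
    rw [r1, r3, r4, r6, r2, r5]
  refine mul_right_cancel (b := ((ω h (h⁻¹ * (g⁻¹ * (x * (g * h)))) (h⁻¹ * (g⁻¹ * (y * (g * h)))) * (ω g (g⁻¹ * (x * (g * h))) (h⁻¹ * (g⁻¹ * (y * (g * h)))) * ω g h (h⁻¹ * (g⁻¹ * (x * (g * h)))))) * (ω (g⁻¹ * (x * g)) (g⁻¹ * (y * g)) h * (ω g (g⁻¹ * (x * (y * g))) h * ω g (g⁻¹ * (x * g)) (g⁻¹ * (y * g)))) * (ω g h (h⁻¹ * (g⁻¹ * (y * (g * h)))) * (ω x (g * h) (h⁻¹ * (g⁻¹ * (y * (g * h)))) * ω x g h)) * (ω y g h * (ω x (y * g) h * ω x y g)) * (ω (x * g) h (h⁻¹ * (g⁻¹ * (y * (g * h)))) * ω g (g⁻¹ * (x * g)) (g⁻¹ * (y * (g * h)))) * (ω (x * g) (g⁻¹ * (y * g)) h * ω x g (g⁻¹ * (y * (g * h)))) : 𝕜ˣ)) ?_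
  conv_rhs => rw [C]
  refine Units.ext ?_
  push_cast
  field_simp
end
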